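/- arXiv:1906.07446 — 2 statements merged into one kernel-verified Lean document; each statement's English description precedes it below -/
import Mathlib

section
/- Let F_q be a finite field, m a prime with q primitive mod m, s > 1 dividing m − 1, and r of order s modulo m. If a_1 ∈ R_m = F_q[x]/(x^m−1) satisfies a_1·μ_r(a_1)·⋯·μ_r^{s−1}(a_1) = 1, and a_j := a_1·μ_r(a_1)·⋯·μ_r^{j−1}(a_1) for 2 ≤ j ≤ s−1, then the R_m-submodule of R_m^s generated by (1, a_1, …, a_{s−1}) is invariant under the map (f_1, …, f_s) ↦ (μ_r(f_s), μ_r(f_1), …, μ_r(f_{s−1})). -/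
set_option synthInstance.maxHeartbeats 1000000

open Polynomial

/-- The multiplier map `μ_r : f(x) ↦ f(x^r)` on `R_m = F[x]/(x^m - 1)`, defined by lifting
the evaluation at `x^r`. -/
noncomputable def muR (F : Type*) [Field F] (m r : ℕ) :
    (Polynomial F ⧸ Ideal.span {(X : Polynomial F) ^ m - 1}) →ₐ[F]
    (Polynomial F ⧸ Ideal.span {(X : Polynomial F) ^ m - 1}) :=
  Ideal.Quotient.liftₐ _
    (Polynomial.aeval ((Ideal.Quotient.mk (Ideal.span {(X : Polynomial F) ^ m - 1}) X) ^ r))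
    (by
      intro a ha
      obtain ⟨c, rfl⟩ := (Ideal.mem_span_singleton.mp ha)
      have hX : (Ideal.Quotient.mk (Ideal.span {(X : Polynomial F) ^ m - 1}) X) ^ m = 1 := by
        rw [← map_pow, ← map_one (Ideal.Quotient.mk (Ideal.span {(X : Polynomial F) ^ m - 1}))]
        rw [Ideal.Quotient.eq]
        exact Ideal.mem_span_singleton_self _
      simp only [map_mul, map_sub, map_pow, map_one, Polynomial.aeval_X]
      rw [← pow_mul, mul_comm r m, pow_mul, hX, one_pow, sub_self, zero_mul])

/-!
With `P n = a · μ(a) ⋯ μⁿ⁻¹(a)` one has `μ(P n) · a = P (n + 1)`, and `P s = 1 = P 0`. Hence the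
cyclically shifted image under `μ` of the generator `v = (P 0, …, P (s - 1))` is `v` times the unit
`a⁻¹ = μ(P (s - 1))`, and a `μ`-semilinear map sending the generator to a multiple of itself
preserves the module it spans.
-/

open Finset

section TwistedProduct

variable {M G : Type*} [CommMonoid M] [FunLike G M M] [MonoidHomClass G M M] (f : G) (a : M)

theorem map_prod_range_iterate_mul (n : ℕ) :
    f (∏ i ∈ range n, (⇑f)^[i] a) * a = ∏ i ∈ range (n + 1), (⇑f)^[i] a := by
  simp only [prod_range_succ', map_prod, ← Function.iterate_succ_apply' f,
    Function.iterate_zero_apply]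

theorem map_prod_range_iterate_pred_mul {s : ℕ} [NeZero s] (ha : ∏ i ∈ range s, (⇑f)^[i] a = 1)
    (j : Fin s) :
    f (∏ i ∈ range (j - 1 : Fin s), (⇑f)^[i] a) * a = ∏ i ∈ range j, (⇑f)^[i] a := by
  rw [map_prod_range_iterate_mul]
  rcases eq_or_ne j 0 with rfl | hj
  · obtain ⟨n, rfl⟩ := Nat.exists_eq_succ_of_ne_zero (NeZero.ne s)
    simpa [Fin.coe_sub_one] using ha
  · have hj' : (j : ℕ) ≠ 0 := Fin.val_ne_zero_iff.mpr hj
    rw [Fin.val_sub_one_of_ne_zero hj, Nat.sub_add_cancel (Nat.one_le_iff_ne_zero.mpr hj')]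

end TwistedProduct

theorem twist_comp_mem_span_singleton {R S ι : Type*} [CommSemiring R] [FunLike S R R]
    [RingHomClass S R R] (σ : S) (e : ι → ι)
    {v : ι → R} {a b : R} (hv : ∀ j, σ (v (e j)) * a = v j) (hab : a * b = 1) :
    ∀ w ∈ Submodule.span R {v}, (fun j => σ (w (e j))) ∈ Submodule.span R {v} := by
  intro w hw
  obtain ⟨c, rfl⟩ := Submodule.mem_span_singleton.mp hw
  refine Submodule.mem_span_singleton.mpr ⟨σ c * b, funext fun j => ?_⟩
  calc σ c * b * v j = σ c * σ (v (e j)) * (a * b) := by rw [← hv j]; ring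
    _ = σ (c * v (e j)) := by rw [hab, mul_one, map_mul]

theorem circulant_metacyclic_invariant_general (F : Type*) [Field F] [Fintype F] (m s r : ℕ)
    [hsz : NeZero s]
    (a1 : Polynomial F ⧸ Ideal.span {(X : Polynomial F) ^ m - 1})
    (ha1 : (∏ i ∈ Finset.range s, (⇑(muR F m r))^[i] a1) = 1) :
    ∀ w ∈ Submodule.span (Polynomial F ⧸ Ideal.span {(X : Polynomial F) ^ m - 1})
        {(fun j : Fin s => ∏ i ∈ Finset.range (j : ℕ), (⇑(muR F m r))^[i] a1)},
      (fun j : Fin s => muR F m r (w (j - 1))) ∈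
        Submodule.span (Polynomial F ⧸ Ideal.span {(X : Polynomial F) ^ m - 1})
          {(fun j : Fin s => ∏ i ∈ Finset.range (j : ℕ), (⇑(muR F m r))^[i] a1)} := by
  have hunit : a1 * muR F m r (∏ i ∈ range (s - 1), (⇑(muR F m r))^[i] a1) = 1 := by
    rw [mul_comm, map_prod_range_iterate_mul, Nat.sub_add_cancel NeZero.one_le, ha1]
  exact twist_comp_mem_span_singleton (muR F m r) (fun j : Fin s => j - 1)
    (map_prod_range_iterate_pred_mul (muR F m r) a1 ha1) hunit

/-- Lemma 1 (ideal): if `a_1 μ_r(a_1) ⋯ μ_r^{s-1}(a_1) = 1` and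
`a_j = a_1 μ_r(a_1) ⋯ μ_r^{j-1}(a_1)`, then the `R_m`-submodule of `R_m^s` generated by
`(1, a_1, …, a_{s-1})` is invariant under
`(f_1, …, f_s) ↦ (μ_r(f_s), μ_r(f_1), …, μ_r(f_{s-1}))`. -/
theorem circulant_metacyclic_invariant (F : Type*) [Field F] [Fintype F] (m s r : ℕ)
    [hm : Fact m.Prime] [hsz : NeZero s] (hdvdq : ¬ m ∣ Fintype.card F)
    (hprim : orderOf ((Fintype.card F : ZMod m)) = m - 1)
    (hs1 : 1 < s) (hsm : s ∣ m - 1) (hr : orderOf ((r : ZMod m)) = s)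
    (a1 : Polynomial F ⧸ Ideal.span {(X : Polynomial F) ^ m - 1})
    (ha1 : (∏ i ∈ Finset.range s, (⇑(muR F m r))^[i] a1) = 1) :
    ∀ w ∈ Submodule.span (Polynomial F ⧸ Ideal.span {(X : Polynomial F) ^ m - 1})
        {(fun j : Fin s => ∏ i ∈ Finset.range (j : ℕ), (⇑(muR F m r))^[i] a1)},
      (fun j : Fin s => muR F m r (w (j - 1))) ∈
        Submodule.span (Polynomial F ⧸ Ideal.span {(X : Polynomial F) ^ m - 1})
          {(fun j : Fin s => ∏ i ∈ Finset.range (j : ℕ), (⇑(muR F m r))^[i] a1)} :=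
  circulant_metacyclic_invariant_general F m s r (hsz := hsz) a1 ha1
end

section
/- Let m be a prime, r an integer with r ≢ 1 (mod m) and r^s ≡ 1 (mod m), s > 1, and F_q a finite field whose characteristic does not divide m. Then there is no tuple (a_1, …, a_{s−1}) ∈ R_m^{s−1} satisfying simultaneously: a_1·μ_r(a_1)·⋯·μ_r^{s−1}(a_1) = 1 and a_1 = a_1·x^{r−1}. -/
open Polynomial

/-- Remark 1: if `m` is prime, `r ≢ 1 (mod m)`, `r^s ≡ 1 (mod m)`, `s > 1`, and the
characteristic of `F_q` does not divide `m`, then no tuple `(a_1, …, a_{s-1})` satisfies both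
`a_1 μ_r(a_1) ⋯ μ_r^{s-1}(a_1) = 1` and `a_1 = a_1 · x^{r-1}`. -/
theorem no_two_sided (F : Type*) [Field F] [Fintype F] (m s r : ℕ) [hm : Fact m.Prime]
    (hr1 : 1 ≤ r) (hrne : ¬ r ≡ 1 [MOD m]) (hrs : r ^ s ≡ 1 [MOD m]) (hs : 1 < s)
    (hchar : ¬ ringChar F ∣ m) :
    ¬ ∃ a : Fin (s - 1) → (Polynomial F ⧸ Ideal.span {(X : Polynomial F) ^ m - 1}),
      (∏ i ∈ Finset.range s, (⇑(muR F m r))^[i] (a ⟨0, by omega⟩)) = 1 ∧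
      a ⟨0, by omega⟩ = a ⟨0, by omega⟩ *
        (Ideal.Quotient.mk (Ideal.span {(X : Polynomial F) ^ m - 1}) X) ^ (r - 1) := by
  rintro ⟨a, hprod, heq⟩
  have hm2 : 2 ≤ m := hm.out.two_le
  haveI : NeZero m := ⟨by omega⟩
  set x : Polynomial F ⧸ Ideal.span {(X : Polynomial F) ^ m - 1} :=
    Ideal.Quotient.mk (Ideal.span {(X : Polynomial F) ^ m - 1}) X with hxdef
  have hXm : x ^ m = 1 := by
    rw [hxdef, ← map_pow, ← map_one (Ideal.Quotient.mk (Ideal.span {(X : Polynomial F) ^ m - 1})),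
      Ideal.Quotient.eq]
    exact Ideal.mem_span_singleton_self _
  have h0 : 0 < s - 1 := by omega
  set a0 : Polynomial F ⧸ Ideal.span {(X : Polynomial F) ^ m - 1} := a ⟨0, h0⟩ with ha0
  have heq' : a0 = a0 * x ^ (r - 1) := heq
  have hstep : ∀ n : ℕ, a0 = a0 * x ^ (n * (r - 1)) := by
    intro n
    induction n with
    | zero => simp
    | succ n ih =>
      have hexp : (n + 1) * (r - 1) = (r - 1) + n * (r - 1) := by ring
      rw [hexp, pow_add, ← mul_assoc, ← heq']
      exact ih
  have hc : ((r - 1 : ℕ) : ZMod m) ≠ 0 := by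
    intro h
    rw [Nat.cast_sub hr1, sub_eq_zero] at h
    exact hrne ((ZMod.natCast_eq_natCast_iff _ _ _).mp (by simpa using h))
  obtain ⟨n, hn⟩ : ∃ n : ℕ, n * (r - 1) ≡ 1 [MOD m] := by
    refine ⟨((((r - 1 : ℕ)) : ZMod m))⁻¹.val, ?_⟩
    have key : ((((((r - 1 : ℕ)) : ZMod m))⁻¹.val * (r - 1) : ℕ) : ZMod m) = ((1 : ℕ) : ZMod m) := by
      rw [Nat.cast_mul, Nat.cast_one, ZMod.natCast_val, ZMod.cast_id]
      exact inv_mul_cancel₀ hc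
    exact (ZMod.natCast_eq_natCast_iff _ _ _).mp key
  have hmod : n * (r - 1) % m = 1 := by
    have h := hn
    unfold Nat.ModEq at h
    rwa [Nat.mod_eq_of_lt (show 1 < m by omega)] at h
  obtain ⟨t, ht⟩ : ∃ t, n * (r - 1) = m * t + 1 :=
    ⟨n * (r - 1) / m, by
      have h := Nat.div_add_mod (n * (r - 1)) m
      rw [hmod] at h
      exact h.symm⟩
  have hax : a0 * x = a0 := by
    have h1 := hstep n
    rw [ht, pow_add, pow_mul, hXm, one_pow, one_mul, pow_one] at h1
    exact h1.symm
  obtain ⟨k, rfl⟩ : ∃ k, s = k + 2 := ⟨s - 2, by omega⟩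
  rw [Finset.prod_range_succ'] at hprod
  simp only [Function.iterate_zero_apply] at hprod
  have hprod' : (∏ i ∈ Finset.range (k + 1),
      (⇑(muR F m r))^[i + 1] a0) * a0 = 1 := hprod
  have hx1 : x = 1 := by
    conv_lhs => rw [← one_mul x, ← hprod']
    rw [mul_assoc, hax, hprod']
  have hmem : (X : Polynomial F) - 1 ∈ Ideal.span {(X : Polynomial F) ^ m - 1} := by
    rw [← Ideal.Quotient.eq, map_one]
    exact hx1
  have hdvd : (X : Polynomial F) ^ m - 1 ∣ (X : Polynomial F) - 1 :=
    Ideal.mem_span_singleton.mp hmem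
  have hC : (1 : Polynomial F) = C 1 := by simp
  rw [hC] at hdvd
  have hne : (X : Polynomial F) - C 1 ≠ 0 := Polynomial.X_sub_C_ne_zero 1
  have hle := Polynomial.natDegree_le_of_dvd hdvd hne
  rw [Polynomial.natDegree_X_pow_sub_C, Polynomial.natDegree_X_sub_C] at hle
  omega
end
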